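/- Let Ω ⊆ ℝ^n be a convex set and T ≥ 1. For t = 0, 1, …, T+1 let r_t : ℝ^n → ℝ be differentiable functions and write R_t := r_0 + r_1 + ⋯ + r_t. For t = 1, …, T let Q_t ∈ ℝ^{n×n} be positive definite matrices such that R_t is 1-strongly convex on Ω with respect to ‖·‖_{Q_t}. Let f_1, …, f_T : ℝ^n → ℝ, let x_1, …, x_{T+1} ∈ Ω, x̂_1, …, x̂_T ∈ Ω, and g_t, g̃_t ∈ ℝ^n (t = 1, …, T) be such that for each t: (i) g_t is a subgradient of f_t at x̂_t over Ω; (ii) x̂_t is a minimizer over Ω of x ↦ ⟨g̃_t, x⟩ + B_{R_t}(x, x_t); (iii) x_{t+1} is a minimizer over Ω of x ↦ ⟨g_t, x⟩ + B_{R_t}(x, x_t). Then for every x* ∈ Ω, ∑_{t=1}^T (f_t(x̂_t) − f_t(x*)) ≤ (1/2)∑_{t=1}^T ‖g_t − g̃_t‖_{Q_t⁻¹}² + ∑_{t=1}^T B_{r_t}(x*, x_t) + B_{r_0}(x*, x_1) − B_{R_T}(x*, x_{T+1}). -/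

import Mathlib

/-!
Write `B = B_{R_t}`. The first-order optimality conditions of the two proximal steps of round `t`,
rewritten with the three-point identity for Bregman divergences, give
`⟪g_t, x̂_t - x*⟫ ≤ ⟪g_t - g̃_t, x̂_t - x_{t+1}⟫ - B(x_{t+1}, x̂_t) - B(x̂_t, x_t) + B(x*, x_t) - B(x*, x_{t+1})`.
Fenchel–Young for the dual pair `‖·‖_{Q_t}`, `‖·‖_{Q_t⁻¹}` and strong convexity absorb the first two
terms, and `B(x̂_t, x_t) ≥ 0`. Since `B_{R_t} = B_{R_{t-1}} + B_{r_t}`, summing over `t` telescopes.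
-/

open scoped RealInnerProductSpace
open Finset

noncomputable def breg {n : ℕ} (ψ : EuclideanSpace ℝ (Fin n) → ℝ)
    (Dψ : EuclideanSpace ℝ (Fin n) → EuclideanSpace ℝ (Fin n))
    (x y : EuclideanSpace ℝ (Fin n)) : ℝ :=
  ψ x - ψ y - ⟪Dψ y, x - y⟫

noncomputable def quadForm {n : ℕ} (Q : Matrix (Fin n) (Fin n) ℝ)
    (x : EuclideanSpace ℝ (Fin n)) : ℝ :=
  ∑ i, ∑ j, x i * Q i j * x j

open Matrix

section Gradient

variable {𝕜 F : Type*} [RCLike 𝕜] [NormedAddCommGroup F] [InnerProductSpace 𝕜 F] [CompleteSpace F]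
  {φ ψ : F → 𝕜} {G H a : F}

theorem HasGradientAt.add (hφ : HasGradientAt φ G a) (hψ : HasGradientAt ψ H a) :
    HasGradientAt (fun z => φ z + ψ z) (G + H) a := by
  rw [hasGradientAt_iff_hasFDerivAt, map_add]
  exact hφ.hasFDerivAt.add hψ.hasFDerivAt

theorem HasGradientAt.sub (hφ : HasGradientAt φ G a) (hψ : HasGradientAt ψ H a) :
    HasGradientAt (fun z => φ z - ψ z) (G - H) a := by
  rw [hasGradientAt_iff_hasFDerivAt, map_sub]
  exact hφ.hasFDerivAt.sub hψ.hasFDerivAt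

theorem HasGradientAt.sub_const (hφ : HasGradientAt φ G a) (c : 𝕜) :
    HasGradientAt (fun z => φ z - c) G a :=
  hasGradientAt_iff_hasFDerivAt.mpr (hφ.hasFDerivAt.sub_const c)

theorem HasGradientAt.finset_sum {ι : Type*} {s : Finset ι} {φ : ι → F → 𝕜} {G : ι → F}
    (h : ∀ i ∈ s, HasGradientAt (φ i) (G i) a) :
    HasGradientAt (fun z => ∑ i ∈ s, φ i z) (∑ i ∈ s, G i) a := by
  rw [hasGradientAt_iff_hasFDerivAt, map_sum]
  exact HasFDerivAt.fun_sum fun i hi => (h i hi).hasFDerivAt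

theorem hasGradientAt_inner_right (u a : F) : HasGradientAt (fun z => inner 𝕜 u z) u a := by
  rw [hasGradientAt_iff_hasFDerivAt]
  exact (InnerProductSpace.toDual 𝕜 F u).hasFDerivAt

end Gradient

theorem IsMinOn.inner_gradient_nonneg {F : Type*} [NormedAddCommGroup F] [InnerProductSpace ℝ F]
    [CompleteSpace F] {Ω : Set F} (hΩ : Convex ℝ Ω) {φ : F → ℝ} {G a y : F}
    (hφ : HasGradientAt φ G a) (ha : a ∈ Ω) (hmin : IsMinOn φ Ω a) (hy : y ∈ Ω) :
    0 ≤ ⟪G, y - a⟫ := by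
  simpa using hmin.localize.hasFDerivWithinAt_nonneg hφ.hasFDerivAt.hasFDerivWithinAt
    (sub_mem_posTangentConeAt_of_segment_subset (hΩ.segment_subset ha hy))

section Bregman

variable {n : ℕ} {ψ : EuclideanSpace ℝ (Fin n) → ℝ}
  {Dψ : EuclideanSpace ℝ (Fin n) → EuclideanSpace ℝ (Fin n)}

theorem breg_finset_sum {ι : Type*} (s : Finset ι) (r : ι → EuclideanSpace ℝ (Fin n) → ℝ)
    (Dr : ι → EuclideanSpace ℝ (Fin n) → EuclideanSpace ℝ (Fin n))
    (x y : EuclideanSpace ℝ (Fin n)) :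
    breg (fun w => ∑ i ∈ s, r i w) (fun w => ∑ i ∈ s, Dr i w) x y
      = ∑ i ∈ s, breg (r i) (Dr i) x y := by
  simp only [breg, sum_sub_distrib, sum_inner]

theorem inner_sub_eq_breg_three_point (a b c : EuclideanSpace ℝ (Fin n)) :
    ⟪Dψ b - Dψ c, a - b⟫ = breg ψ Dψ a c - breg ψ Dψ a b - breg ψ Dψ b c := by
  simp only [breg, inner_sub_left, inner_sub_right]
  ring

theorem hasGradientAt_inner_add_breg {a : EuclideanSpace ℝ (Fin n)} (hψ : HasGradientAt ψ (Dψ a) a)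
    (v y : EuclideanSpace ℝ (Fin n)) :
    HasGradientAt (fun z => ⟪v, z⟫ + breg ψ Dψ z y) (v + Dψ a - Dψ y) a := by
  rw [add_sub_assoc]
  exact (hasGradientAt_inner_right v a).add ((hψ.sub_const (ψ y)).sub
    ((hasGradientAt_inner_right (Dψ y) a).sub_const ⟪Dψ y, y⟫) |>.congr_of_eventuallyEq
    (.of_eq (funext fun z => by simp only [breg, inner_sub_right])))

end Bregman

section QuadForm

variable {n : ℕ} {Q : Matrix (Fin n) (Fin n) ℝ}

theorem quadForm_eq_dotProduct (Q : Matrix (Fin n) (Fin n) ℝ) (x : EuclideanSpace ℝ (Fin n)) :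
    quadForm Q x = x.ofLp ⬝ᵥ Q *ᵥ x.ofLp := by
  simp only [quadForm, dotProduct, mulVec, mul_sum, mul_assoc]

theorem quadForm_neg (Q : Matrix (Fin n) (Fin n) ℝ) (x : EuclideanSpace ℝ (Fin n)) :
    quadForm Q (-x) = quadForm Q x := by
  simp only [quadForm, PiLp.neg_apply, neg_mul, mul_neg, neg_neg]

theorem quadForm_nonneg (hQ : Q.PosSemidef) (x : EuclideanSpace ℝ (Fin n)) :
    0 ≤ quadForm Q x := by
  simpa [quadForm_eq_dotProduct] using hQ.dotProduct_mulVec_nonneg x.ofLp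

theorem inner_le_half_quadForm_inv_add_half_quadForm (hQ : Q.PosDef)
    (u v : EuclideanSpace ℝ (Fin n)) :
    ⟪u, v⟫ ≤ 1 / 2 * quadForm Q⁻¹ u + 1 / 2 * quadForm Q v := by
  set p := Q⁻¹ *ᵥ u.ofLp
  have hQp : Q *ᵥ p = u.ofLp := by
    rw [mulVec_mulVec, mul_nonsing_inv _ ((isUnit_iff_isUnit_det Q).mp hQ.isUnit), one_mulVec]
  have hpQ : p ᵥ* Q = u.ofLp := by
    rw [← mulVec_transpose, ← conjTranspose_eq_transpose_of_trivial, hQ.isHermitian.eq, hQp]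
  -- `0 ≤ ‖v - Q⁻¹ u‖_Q²`, expanded
  have hsq := hQ.posSemidef.dotProduct_mulVec_nonneg (v.ofLp - p)
  rw [star_trivial, mulVec_sub, dotProduct_sub, sub_dotProduct, sub_dotProduct,
    dotProduct_mulVec p, hpQ, hQp] at hsq
  rw [quadForm_eq_dotProduct, quadForm_eq_dotProduct, EuclideanSpace.inner_eq_star_dotProduct,
    star_trivial]
  have huv := dotProduct_comm u.ofLp v.ofLp
  have hup := dotProduct_comm u.ofLp p
  linarith

end QuadForm

theorem inner_le_of_optimistic_step {n : ℕ} {Ω : Set (EuclideanSpace ℝ (Fin n))}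
    (hΩ : Convex ℝ Ω) {ψ : EuclideanSpace ℝ (Fin n) → ℝ}
    {Dψ : EuclideanSpace ℝ (Fin n) → EuclideanSpace ℝ (Fin n)}
    (hψ : ∀ z, HasGradientAt ψ (Dψ z) z) {Q : Matrix (Fin n) (Fin n) ℝ} (hQ : Q.PosDef)
    (hstrong : ∀ a ∈ Ω, ∀ b ∈ Ω, 1 / 2 * quadForm Q (a - b) ≤ breg ψ Dψ a b)
    {g g' y xh yn u : EuclideanSpace ℝ (Fin n)}
    (hy : y ∈ Ω) (hxh : xh ∈ Ω) (hyn : yn ∈ Ω) (hu : u ∈ Ω)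
    (hhat : IsMinOn (fun z => ⟪g', z⟫ + breg ψ Dψ z y) Ω xh)
    (hnext : IsMinOn (fun z => ⟪g, z⟫ + breg ψ Dψ z y) Ω yn) :
    ⟪g, xh - u⟫ ≤ 1 / 2 * quadForm Q⁻¹ (g - g') + breg ψ Dψ u y - breg ψ Dψ u yn := by
  have hopt_hat : 0 ≤ ⟪g', yn - xh⟫ + (breg ψ Dψ yn y - breg ψ Dψ yn xh - breg ψ Dψ xh y) := by
    rw [← inner_sub_eq_breg_three_point, ← inner_add_left, ← add_sub_assoc]
    exact hhat.inner_gradient_nonneg hΩ (hasGradientAt_inner_add_breg (hψ xh) g' y) hxh hyn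
  have hopt_next : 0 ≤ ⟪g, u - yn⟫ + (breg ψ Dψ u y - breg ψ Dψ u yn - breg ψ Dψ yn y) := by
    rw [← inner_sub_eq_breg_three_point, ← inner_add_left, ← add_sub_assoc]
    exact hnext.inner_gradient_nonneg hΩ (hasGradientAt_inner_add_breg (hψ yn) g y) hyn hu
  have hyoung := inner_le_half_quadForm_inv_add_half_quadForm hQ (g - g') (xh - yn)
  have hstrong_next : 1 / 2 * quadForm Q (xh - yn) ≤ breg ψ Dψ yn xh := by
    rw [← neg_sub, quadForm_neg]
    exact hstrong yn hyn xh hxh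
  have hbreg_nonneg : 0 ≤ breg ψ Dψ xh y :=
    (mul_nonneg (by norm_num) (quadForm_nonneg hQ.posSemidef _)).trans (hstrong xh hxh y hy)
  have hsplit : ⟪g, xh - u⟫ = ⟪g - g', xh - yn⟫ - ⟪g', yn - xh⟫ - ⟪g, u - yn⟫ := by
    simp only [inner_sub_left, inner_sub_right]
    ring
  linarith

theorem stmt_4_general {n T : ℕ}
    (Ω : Set (EuclideanSpace ℝ (Fin n))) (hΩ : Convex ℝ Ω)
    (r : ℕ → EuclideanSpace ℝ (Fin n) → ℝ)
    (Dr : ℕ → EuclideanSpace ℝ (Fin n) → EuclideanSpace ℝ (Fin n))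
    (hdiff : ∀ t z, HasGradientAt (r t) (Dr t z) z)
    (Q : ℕ → Matrix (Fin n) (Fin n) ℝ)
    (hQpd : ∀ t ∈ Finset.Icc 1 T, (Q t).PosDef)
    (hstrong : ∀ t ∈ Finset.Icc 1 T, ∀ x ∈ Ω, ∀ y ∈ Ω,
      (1/2) * quadForm (Q t) (x - y) ≤
        breg (fun w => ∑ s ∈ Finset.range (t+1), r s w)
             (fun w => ∑ s ∈ Finset.range (t+1), Dr s w) x y)
    (f : ℕ → EuclideanSpace ℝ (Fin n) → ℝ)
    (x xhat g gtilde : ℕ → EuclideanSpace ℝ (Fin n))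
    (hx : ∀ t ∈ Finset.Icc 1 (T+1), x t ∈ Ω)
    (hxhat : ∀ t ∈ Finset.Icc 1 T, xhat t ∈ Ω)
    (hsub : ∀ t ∈ Finset.Icc 1 T, ∀ y ∈ Ω,
      f t (xhat t) + ⟪g t, y - xhat t⟫ ≤ f t y)
    (hhat : ∀ t ∈ Finset.Icc 1 T, IsMinOn (fun z => ⟪gtilde t, z⟫ +
      breg (fun w => ∑ s ∈ Finset.range (t+1), r s w)
           (fun w => ∑ s ∈ Finset.range (t+1), Dr s w) z (x t)) Ω (xhat t))
    (hnext : ∀ t ∈ Finset.Icc 1 T, IsMinOn (fun z => ⟪g t, z⟫ +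
      breg (fun w => ∑ s ∈ Finset.range (t+1), r s w)
           (fun w => ∑ s ∈ Finset.range (t+1), Dr s w) z (x t)) Ω (x (t+1))) :
    ∀ xs ∈ Ω,
      ∑ t ∈ Finset.Icc 1 T, (f t (xhat t) - f t xs) ≤
        (1/2) * ∑ t ∈ Finset.Icc 1 T, quadForm (Q t)⁻¹ (g t - gtilde t)
        + ∑ t ∈ Finset.Icc 1 T, breg (r t) (Dr t) xs (x t)
        + breg (r 0) (Dr 0) xs (x 1)
        - breg (fun w => ∑ s ∈ Finset.range (T+1), r s w)
               (fun w => ∑ s ∈ Finset.range (T+1), Dr s w) xs (x (T+1)) := by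
  intro xs hxs
  -- `B t` is the divergence of `R_{t-1}` from `xs` at `x t`
  let B : ℕ → ℝ := fun t => ∑ s ∈ range t, breg (r s) (Dr s) xs (x t)
  have hstep : ∀ t ∈ Icc 1 T, f t (xhat t) - f t xs ≤
      1 / 2 * quadForm (Q t)⁻¹ (g t - gtilde t) + breg (r t) (Dr t) xs (x t) - (B (t + 1) - B t) := by
    intro t ht
    obtain ⟨ht1, htT⟩ := mem_Icc.mp ht
    have hround := inner_le_of_optimistic_step hΩ
      (fun z => HasGradientAt.finset_sum fun s _ => hdiff s z) (hQpd t ht) (hstrong t ht)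
      (hx t (mem_Icc.mpr ⟨ht1, by omega⟩)) (hxhat t ht)
      (hx (t + 1) (mem_Icc.mpr ⟨by omega, by omega⟩)) hxs (hhat t ht) (hnext t ht)
    rw [breg_finset_sum, breg_finset_sum, sum_range_succ] at hround
    have hsubgrad := hsub t ht xs hxs
    rw [← neg_sub, inner_neg_right] at hsubgrad
    linarith
  calc ∑ t ∈ Icc 1 T, (f t (xhat t) - f t xs)
      ≤ ∑ t ∈ Icc 1 T, (1 / 2 * quadForm (Q t)⁻¹ (g t - gtilde t)
          + breg (r t) (Dr t) xs (x t) - (B (t + 1) - B t)) := sum_le_sum hstep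
    _ = _ := by
      rw [sum_sub_distrib, sum_add_distrib, ← mul_sum, ← Ico_add_one_right_eq_Icc,
        sum_Ico_sub B le_add_self, breg_finset_sum]
      simp only [B, sum_range_one]
      ring

theorem stmt_4 {n T : ℕ} (hT : 1 ≤ T)
    (Ω : Set (EuclideanSpace ℝ (Fin n))) (hΩ : Convex ℝ Ω)
    (r : ℕ → EuclideanSpace ℝ (Fin n) → ℝ)
    (Dr : ℕ → EuclideanSpace ℝ (Fin n) → EuclideanSpace ℝ (Fin n))
    (hdiff : ∀ t z, HasGradientAt (r t) (Dr t z) z)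
    (Q : ℕ → Matrix (Fin n) (Fin n) ℝ)
    (hQpd : ∀ t ∈ Finset.Icc 1 T, (Q t).PosDef)
    (hstrong : ∀ t ∈ Finset.Icc 1 T, ∀ x ∈ Ω, ∀ y ∈ Ω,
      (1/2) * quadForm (Q t) (x - y) ≤
        breg (fun w => ∑ s ∈ Finset.range (t+1), r s w)
             (fun w => ∑ s ∈ Finset.range (t+1), Dr s w) x y)
    (f : ℕ → EuclideanSpace ℝ (Fin n) → ℝ)
    (x xhat g gtilde : ℕ → EuclideanSpace ℝ (Fin n))
    (hx : ∀ t ∈ Finset.Icc 1 (T+1), x t ∈ Ω)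
    (hxhat : ∀ t ∈ Finset.Icc 1 T, xhat t ∈ Ω)
    (hsub : ∀ t ∈ Finset.Icc 1 T, ∀ y ∈ Ω,
      f t (xhat t) + ⟪g t, y - xhat t⟫ ≤ f t y)
    (hhat : ∀ t ∈ Finset.Icc 1 T, IsMinOn (fun z => ⟪gtilde t, z⟫ +
      breg (fun w => ∑ s ∈ Finset.range (t+1), r s w)
           (fun w => ∑ s ∈ Finset.range (t+1), Dr s w) z (x t)) Ω (xhat t))
    (hnext : ∀ t ∈ Finset.Icc 1 T, IsMinOn (fun z => ⟪g t, z⟫ +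
      breg (fun w => ∑ s ∈ Finset.range (t+1), r s w)
           (fun w => ∑ s ∈ Finset.range (t+1), Dr s w) z (x t)) Ω (x (t+1))) :
    ∀ xs ∈ Ω,
      ∑ t ∈ Finset.Icc 1 T, (f t (xhat t) - f t xs) ≤
        (1/2) * ∑ t ∈ Finset.Icc 1 T, quadForm (Q t)⁻¹ (g t - gtilde t)
        + ∑ t ∈ Finset.Icc 1 T, breg (r t) (Dr t) xs (x t)
        + breg (r 0) (Dr 0) xs (x 1)
        - breg (fun w => ∑ s ∈ Finset.range (T+1), r s w)
               (fun w => ∑ s ∈ Finset.range (T+1), Dr s w) xs (x (T+1)) :=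
  stmt_4_general Ω hΩ r Dr hdiff Q hQpd hstrong f x xhat g gtilde hx hxhat hsub hhat hnext
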